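/- arXiv:1611.05632 — 4 statements merged into one kernel-verified Lean document; each statement's English description precedes it below -/
import Mathlib

section
/- Let G be a finite group, S ⊆ G a symmetric set of density σ = |S|/|G| > 0, and g, h ∈ G. Then |(g·S²·g⁻¹) ∩ (h·S²·h⁻¹)| ≥ σ²·|G|. Consequently the symmetric neighbourhood of the identity X := (gS²g⁻¹) ∩ (hS²h⁻¹) satisfies X⁴ ⊆ (gS⁸g⁻¹) ∩ (hS⁸h⁻¹). -/
open Finset
open scoped Pointwise

/-!
Write `A = gSg⁻¹` and `B = hSh⁻¹`; both are symmetric, so `gS²g⁻¹ = A⁻¹A` and `hS²h⁻¹ = B⁻¹B`.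
For every `x`, the set `C = A ∩ xB` satisfies `C⁻¹C ⊆ A⁻¹A ∩ B⁻¹B` and `|C| ≤ |C⁻¹C|`.
Since `∑ₓ |A ∩ xB| = |A||B|`, some `x` has `|A ∩ xB| ≥ |A||B|/|G| = σ²|G|`.
-/

namespace Finset

variable {G : Type*} [Group G] [DecidableEq G]

lemma sum_convolution [Fintype G] (A B : Finset G) : ∑ x, A.convolution B x = #A * #B := by
  rw [← card_product]
  exact (card_eq_sum_card_fiberwise fun _ _ ↦ mem_univ _).symm

lemma exists_card_mul_card_le_card_mul_card_inter_smul [Fintype G] (A B : Finset G) :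
    ∃ x : G, #A * #B ≤ Fintype.card G * #(A ∩ x • B) := by
  have hsum : ∑ x : G, #(A ∩ x • B) = #A * #B := by
    simp only [card_inter_smul, sum_convolution, card_inv]
  obtain ⟨x, -, hx⟩ := exists_le_of_sum_le (s := (univ : Finset G)) (f := fun _ ↦ #A * #B)
    (g := fun x ↦ Fintype.card G * #(A ∩ x • B)) univ_nonempty
    (by rw [sum_const, card_univ, smul_eq_mul, ← mul_sum, hsum])
  exact ⟨x, hx⟩

lemma inv_smul_finset_mul_smul_finset (x : G) (B : Finset G) :
    (x • B)⁻¹ * (x • B) = B⁻¹ * B := by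
  rw [inv_smul_finset_distrib, op_smul_finset_mul_eq_mul_smul_finset, inv_smul_smul]

lemma card_le_card_inv_mul_self (C : Finset G) : #C ≤ #(C⁻¹ * C) := by
  simpa [div_eq_mul_inv] using card_le_card_div_self (s := C⁻¹)

lemma card_mul_card_le_card_mul_card_inv_mul_inter [Fintype G] (A B : Finset G) :
    #A * #B ≤ Fintype.card G * #((A⁻¹ * A) ∩ (B⁻¹ * B)) := by
  obtain ⟨x, hx⟩ := exists_card_mul_card_le_card_mul_card_inter_smul A B
  set C := A ∩ x • B
  have hC : C⁻¹ * C ⊆ (A⁻¹ * A) ∩ (B⁻¹ * B) := by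
    rw [← inv_smul_finset_mul_smul_finset x B]
    exact subset_inter (by gcongr <;> exact inter_subset_left)
      (by gcongr <;> exact inter_subset_right)
  calc #A * #B ≤ Fintype.card G * #C := hx
    _ ≤ Fintype.card G * #((A⁻¹ * A) ∩ (B⁻¹ * B)) :=
      Nat.mul_le_mul_left _ <| (card_le_card_inv_mul_self C).trans (card_le_card hC)

lemma sq_eq_inv_mul_self {A : Finset G} (hA : A⁻¹ = A) : A ^ 2 = A⁻¹ * A := by
  rw [hA, sq]

lemma one_mem_sq_of_inv_eq {A : Finset G} (hA : A⁻¹ = A) (hne : A.Nonempty) :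
    (1 : G) ∈ A ^ 2 := by
  simpa [sq_eq_inv_mul_self hA, ← div_eq_mul_inv] using hne.one_mem_div

lemma inv_sq_of_inv_eq {A : Finset G} (hA : A⁻¹ = A) : (A ^ 2)⁻¹ = A ^ 2 := by
  rw [← inv_pow, hA]

lemma image_conj_pow (S : Finset G) (k : G) (n : ℕ) :
    (S ^ n).image (fun s ↦ k * s * k⁻¹) = S.image (MulAut.conj k) ^ n :=
  image_pow (MulAut.conj k) S n

lemma inv_image_conj_of_inv_eq {S : Finset G} (hS : S⁻¹ = S) (k : G) :
    (S.image (MulAut.conj k))⁻¹ = S.image (MulAut.conj k) := by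
  rw [← image_inv, hS]

lemma card_image_conj (S : Finset G) (k : G) : #(S.image (MulAut.conj k)) = #S :=
  card_image_of_injective S (MulAut.conj k).injective

end Finset

/-- for a symmetric set `S` of density `σ = |S|/|G| > 0` and `g, h ∈ G`,
`|(gS²g⁻¹) ∩ (hS²h⁻¹)| ≥ σ²|G|`; moreover `X := (gS²g⁻¹) ∩ (hS²h⁻¹)` is a symmetric
neighbourhood of the identity with `X⁴ ⊆ (gS⁸g⁻¹) ∩ (hS⁸h⁻¹)`. -/
theorem stmt11 {G : Type*} [Group G] [Fintype G] [DecidableEq G] (S : Finset G)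
    (hsymm : S⁻¹ = S) (hS : S.Nonempty) (g h : G) :
    (((S.card : ℝ) / Fintype.card G) ^ 2 * Fintype.card G ≤
      ((((S ^ 2).image fun s => g * s * g⁻¹) ∩ ((S ^ 2).image fun s => h * s * h⁻¹)).card : ℝ)) ∧
    (1 : G) ∈ ((S ^ 2).image fun s => g * s * g⁻¹) ∩ ((S ^ 2).image fun s => h * s * h⁻¹) ∧
    (((S ^ 2).image fun s => g * s * g⁻¹) ∩ ((S ^ 2).image fun s => h * s * h⁻¹))⁻¹ =
      ((S ^ 2).image fun s => g * s * g⁻¹) ∩ ((S ^ 2).image fun s => h * s * h⁻¹) ∧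
    (((S ^ 2).image fun s => g * s * g⁻¹) ∩ ((S ^ 2).image fun s => h * s * h⁻¹)) ^ 4 ⊆
      ((S ^ 8).image fun s => g * s * g⁻¹) ∩ ((S ^ 8).image fun s => h * s * h⁻¹) := by
  simp only [image_conj_pow]
  set A := S.image (MulAut.conj g)
  set B := S.image (MulAut.conj h)
  have hA : A⁻¹ = A := inv_image_conj_of_inv_eq hsymm g
  have hB : B⁻¹ = B := inv_image_conj_of_inv_eq hsymm h
  have hcard : #S * #S ≤ Fintype.card G * #(A ^ 2 ∩ B ^ 2) := by
    simpa only [sq_eq_inv_mul_self hA, sq_eq_inv_mul_self hB, A, B, card_image_conj] using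
      card_mul_card_le_card_mul_card_inv_mul_inter A B
  refine ⟨?_,
    mem_inter.2 ⟨one_mem_sq_of_inv_eq hA (hS.image _), one_mem_sq_of_inv_eq hB (hS.image _)⟩,
    by rw [inv_inter, inv_sq_of_inv_eq hA, inv_sq_of_inv_eq hB],
    inter_pow_subset.trans (by rw [← pow_mul, ← pow_mul])⟩
  have hG : (0 : ℝ) < Fintype.card G := by exact_mod_cast Fintype.card_pos
  calc ((#S : ℝ) / Fintype.card G) ^ 2 * Fintype.card G = #S * #S / Fintype.card G := by
        field_simp
    _ ≤ #(A ^ 2 ∩ B ^ 2) := by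
        rw [div_le_iff₀' hG]
        exact_mod_cast hcard
end

section
/- Let G be a finite group and let B = (B₀₊, B₀, B₀₋; B₁) be a 1-step ε-closed multiplicative system. Then for every x ∈ B₁, the total variation distance between the uniform probability measure on B₀·x and the uniform probability measure on B₀ is O(ε); more precisely, Σ_{y∈G} |μ_{B₀x}(y) − μ_{B₀}(y)| ≤ 2 − 2·|B₀₋|/|B₀| ≤ 2(1 − 1/(1+ε)). -/
open Finset

/-- A symmetric neighbourhood of the identity: contains `1` and is closed under inverses. -/
def SymmNbhd {G : Type*} [Group G] (S : Finset G) : Prop :=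
  (1 : G) ∈ S ∧ ∀ x ∈ S, x⁻¹ ∈ S

/-- An `(r+1)`-step `ε`-closed multiplicative system, with levels `0, …, r` given by the
triples `(Bp i, B i, Bm i)` and final set `Bl` (playing the role of `B_{r+1}`).  Here
`B_{i+1}` in the closure axiom is interpreted as `B (i+1)` for `i < r` and as `Bl`
for `i = r`. -/
structure IsMulSystem {G : Type*} [Group G] [DecidableEq G] (r : ℕ) (ε : ℝ)
    (Bp B Bm : ℕ → Finset G) (Bl : Finset G) : Prop where
  symm_p : ∀ i ≤ r, SymmNbhd (Bp i)
  symm_mid : ∀ i ≤ r, SymmNbhd (B i)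
  symm_m : ∀ i ≤ r, SymmNbhd (Bm i)
  symm_last : SymmNbhd Bl
  sub_p : ∀ i ≤ r, B i ⊆ Bp i
  sub_m : ∀ i ≤ r, Bm i ⊆ B i
  nested : ∀ i ≤ r, (if i < r then Bp (i + 1) else Bl) ⊆ Bm i
  closure : ∀ i ≤ r, ∀ x ∈ (if i < r then B (i + 1) else Bl),
      ∀ y ∈ (if i < r then B (i + 1) else Bl),
      Bm i ⊆ (B i).image (fun b => y * b * x) ∧
        (B i).image (fun b => y * b * x) ⊆ Bp i
  card_p : ∀ i ≤ r, ((Bp i).card : ℝ) ≤ (1 + ε) * (B i).card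
  card_m : ∀ i ≤ r, ((B i).card : ℝ) ≤ (1 + ε) * (Bm i).card

open scoped Pointwise

/-- Approximate right-invariant Haar measure: in a 1-step `ε`-closed
multiplicative system `(B₀₊, B₀, B₀₋; B₁)`, for any `x ∈ B₁` the total variation distance
between the uniform probability measures on `B₀·x` and on `B₀` is at most
`2 − 2|B₀₋|/|B₀| ≤ 2(1 − 1/(1+ε))`. -/
theorem stmt13 {G : Type*} [Group G] [Fintype G] [DecidableEq G] (ε : ℝ) (hε : 0 ≤ ε)
    (Bp B Bm : ℕ → Finset G) (Bl : Finset G)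
    (hsys : IsMulSystem 0 ε Bp B Bm Bl) (x : G) (hx : x ∈ Bl) :
    (∑ y : G,
      |(if y ∈ B 0 * ({x} : Finset G) then ((B 0 * ({x} : Finset G)).card : ℝ)⁻¹ else 0) -
        (if y ∈ B 0 then ((B 0).card : ℝ)⁻¹ else 0)|) ≤
      2 - 2 * ((Bm 0).card : ℝ) / (B 0).card ∧
    2 - 2 * ((Bm 0).card : ℝ) / (B 0).card ≤ 2 * (1 - 1 / (1 + ε)) := by
  obtain ⟨_, symm_mid, _, symm_last, _, sub_m, _, closure, _, card_m⟩ := hsys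
  set S := B 0 * ({x} : Finset G) with hS
  have hone : (1:G) ∈ Bl := symm_last.1
  have hclos := closure 0 le_rfl x (by simpa using hx) 1 (by simpa using hone)
  have hBmS : Bm 0 ⊆ S := by
    intro b hb
    have hb' := hclos.1 hb
    simp only [Finset.mem_image] at hb'
    obtain ⟨c, hc, hcb⟩ := hb'
    rw [hS, Finset.mem_mul]
    exact ⟨c, hc, x, Finset.mem_singleton_self x, by simpa using hcb⟩
  have hBmB : Bm 0 ⊆ B 0 := sub_m 0 le_rfl
  have hcardS : S.card = (B 0).card := by
    rw [hS, Finset.mul_singleton]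
    exact Finset.card_image_of_injective _ (mul_left_injective x)
  have hn : 0 < (B 0).card := Finset.card_pos.2 ⟨1, (symm_mid 0 le_rfl).1⟩
  have hnpos : (0:ℝ) < ((B 0).card : ℝ) := by exact_mod_cast hn
  have hm : (Bm 0).card ≤ (B 0).card := Finset.card_le_card hBmB
  have hterm : ∀ y : G,
      |(if y ∈ S then ((S.card : ℝ))⁻¹ else 0) - (if y ∈ B 0 then ((B 0).card : ℝ)⁻¹ else 0)|
      = if y ∈ (S \ B 0) ∪ (B 0 \ S) then ((B 0).card : ℝ)⁻¹ else 0 := by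
    intro y
    rw [hcardS]
    have ha : |((B 0).card : ℝ)⁻¹| = ((B 0).card : ℝ)⁻¹ := abs_of_nonneg (inv_nonneg.2 hnpos.le)
    by_cases h1 : y ∈ S <;> by_cases h2 : y ∈ B 0 <;> simp [h1, h2, ha]
  have hsum : (∑ y : G,
      |(if y ∈ S then ((S.card : ℝ))⁻¹ else 0) - (if y ∈ B 0 then ((B 0).card : ℝ)⁻¹ else 0)|)
      = (((S \ B 0) ∪ (B 0 \ S)).card : ℝ) * ((B 0).card : ℝ)⁻¹ := by
    rw [Finset.sum_congr rfl fun y _ => hterm y, Finset.sum_ite_mem, Finset.univ_inter,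
      Finset.sum_const, nsmul_eq_mul]
  constructor
  · rw [hsum]
    have hd : Disjoint (S \ B 0) (B 0 \ S) := disjoint_sdiff_sdiff
    have hsub1 : S \ B 0 ⊆ S \ Bm 0 := Finset.sdiff_subset_sdiff le_rfl hBmB
    have hsub2 : B 0 \ S ⊆ B 0 \ Bm 0 := Finset.sdiff_subset_sdiff le_rfl hBmS
    have hc1 : (S \ B 0).card ≤ (B 0).card - (Bm 0).card := by
      calc (S \ B 0).card ≤ (S \ Bm 0).card := Finset.card_le_card hsub1
        _ = S.card - (Bm 0).card := Finset.card_sdiff_of_subset hBmS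
        _ = (B 0).card - (Bm 0).card := by rw [hcardS]
    have hc2 : (B 0 \ S).card ≤ (B 0).card - (Bm 0).card := by
      calc (B 0 \ S).card ≤ (B 0 \ Bm 0).card := Finset.card_le_card hsub2
        _ = (B 0).card - (Bm 0).card := Finset.card_sdiff_of_subset hBmB
    have hcard : (((S \ B 0) ∪ (B 0 \ S)).card : ℝ) ≤ 2 * (((B 0).card : ℝ) - (Bm 0).card) := by
      rw [Finset.card_union_of_disjoint hd]
      push_cast
      have e1 : ((S \ B 0).card : ℝ) ≤ ((B 0).card : ℝ) - (Bm 0).card := by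
        have := hc1
        have : ((S \ B 0).card : ℝ) ≤ (((B 0).card - (Bm 0).card : ℕ) : ℝ) := by exact_mod_cast hc1
        rwa [Nat.cast_sub hm] at this
      have e2 : ((B 0 \ S).card : ℝ) ≤ ((B 0).card : ℝ) - (Bm 0).card := by
        have : ((B 0 \ S).card : ℝ) ≤ (((B 0).card - (Bm 0).card : ℕ) : ℝ) := by exact_mod_cast hc2
        rwa [Nat.cast_sub hm] at this
      linarith
    have hne : ((B 0).card : ℝ) ≠ 0 := hnpos.ne'
    have hstep : (((S \ B 0) ∪ (B 0 \ S)).card : ℝ) * ((B 0).card : ℝ)⁻¹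
        ≤ 2 * (((B 0).card : ℝ) - (Bm 0).card) * ((B 0).card : ℝ)⁻¹ :=
      mul_le_mul_of_nonneg_right hcard (inv_nonneg.2 hnpos.le)
    have heq : 2 * (((B 0).card : ℝ) - (Bm 0).card) * ((B 0).card : ℝ)⁻¹
        = 2 - 2 * ((Bm 0).card : ℝ) / ((B 0).card : ℝ) := by
      field_simp
    linarith
    
  · have hcm := card_m 0 le_rfl
    have h1 : (1:ℝ)/(1+ε) ≤ ((Bm 0).card : ℝ) / ((B 0).card : ℝ) := by
      rw [div_le_div_iff₀ (by linarith) hnpos]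
      nlinarith
    have h2 : 2 * ((Bm 0).card : ℝ) / ((B 0).card : ℝ)
        = 2 * (((Bm 0).card : ℝ) / ((B 0).card : ℝ)) := by ring
    rw [h2]
    linarith
end

section
/- Let G be a finite group, K a finite nonempty subset of G, and S ⊆ G a finite set whose elements have distinct squares (s² = s'² implies s = s'). Suppose X ⊆ G. Then Σ_{s,s'∈S} |sX ∩ s'X|·|Xs ∩ Xs'| ≥ |X|⁴|S|²/(|SX|·|XS|). Consequently there exists s' ∈ S such that for at least (|X|²/(|SX||XS|))·|S| elements s ∈ S one has sX ∩ s'X ≠ ∅ and Xs ∩ Xs' ≠ ∅, and for each such s, s² ∈ s'·X·X⁻¹·X⁻¹·X·s' = s'X⁴s' (when X is symmetric). -/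
open Finset
open scoped Pointwise

private lemma sum_ind {G : Type*} [DecidableEq G] (T A : Finset G) :
    ∑ z ∈ T, (if z ∈ A then (1 : ℝ) else 0) = ((T ∩ A).card : ℝ) := by
  rw [Finset.sum_boole, Finset.filter_mem_eq_inter]

private lemma sum_ind2 {G : Type*} [Fintype G] [DecidableEq G] (A B : Finset G) :
    ∑ z : G, (if z ∈ A then (1 : ℝ) else 0) * (if z ∈ B then (1 : ℝ) else 0)
      = ((A ∩ B).card : ℝ) := by
  have h : ∀ z : G, (if z ∈ A then (1 : ℝ) else 0) * (if z ∈ B then (1 : ℝ) else 0)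
      = if z ∈ A ∩ B then (1 : ℝ) else 0 := by
    intro z; by_cases h1 : z ∈ A <;> by_cases h2 : z ∈ B <;> simp [h1, h2]
  simp_rw [h]
  rw [Finset.sum_boole, Finset.filter_mem_eq_inter, Finset.univ_inter]

private lemma sum_lin_expand {ι α β : Type*} (S : Finset ι) (U : Finset α) (V : Finset β)
    (f : ι → α → ℝ) (g : ι → β → ℝ) :
    ∑ z ∈ U, ∑ z' ∈ V, ∑ s ∈ S, f s z * g s z'
      = ∑ s ∈ S, (∑ z ∈ U, f s z) * (∑ z' ∈ V, g s z') := by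
  rw [← Finset.sum_product']
  rw [Finset.sum_comm]
  refine Finset.sum_congr rfl fun s _ => ?_
  rw [Finset.sum_mul_sum, ← Finset.sum_product']

private lemma sum_sq_expand {ι α β : Type*} (S : Finset ι) (U : Finset α) (V : Finset β)
    (f : ι → α → ℝ) (g : ι → β → ℝ) :
    ∑ z ∈ U, ∑ z' ∈ V, (∑ s ∈ S, f s z * g s z') ^ 2
      = ∑ s ∈ S, ∑ s' ∈ S,
          (∑ z ∈ U, f s z * f s' z) * (∑ z' ∈ V, g s z' * g s' z') := by
  have h : ∀ z z', (∑ s ∈ S, f s z * g s z') ^ 2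
      = ∑ q ∈ S ×ˢ S, (f q.1 z * f q.2 z) * (g q.1 z' * g q.2 z') := by
    intro z z'
    rw [sq, Finset.sum_mul_sum, ← Finset.sum_product']
    exact Finset.sum_congr rfl fun q _ => by ring
  simp_rw [h]
  rw [sum_lin_expand (S ×ˢ S) U V (fun q z => f q.1 z * f q.2 z)
      (fun q z' => g q.1 z' * g q.2 z'), Finset.sum_product]

set_option maxHeartbeats 1000000 in
/-- for `S` with distinct squares,
`Σ_{s,s'∈S} |sX ∩ s'X|·|Xs ∩ Xs'| ≥ |X|⁴|S|²/(|SX||XS|)`, and there is an `s' ∈ S` such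
that at least `(|X|²/(|SX||XS|))·|S|` elements `s ∈ S` have `sX ∩ s'X ≠ ∅` and
`Xs ∩ Xs' ≠ ∅`, and (when `X` is symmetric) each such `s` has `s² ∈ s'·X⁴·s'`. -/
theorem stmt14 {G : Type*} [Group G] [Fintype G] [DecidableEq G] (S X : Finset G)
    (hS : S.Nonempty)
    (hsq : ∀ s ∈ S, ∀ s' ∈ S, s ^ 2 = s' ^ 2 → s = s') :
    (((X.card : ℝ)) ^ 4 * (S.card : ℝ) ^ 2 / (((S * X).card : ℝ) * ((X * S).card : ℝ)) ≤
      ∑ s ∈ S, ∑ s' ∈ S,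
        (((({s} : Finset G) * X) ∩ (({s'} : Finset G) * X)).card : ℝ) *
          (((X * ({s} : Finset G)) ∩ (X * ({s'} : Finset G))).card : ℝ)) ∧
    ∃ s' ∈ S,
      ((X.card : ℝ) ^ 2 / (((S * X).card : ℝ) * ((X * S).card : ℝ))) * S.card ≤
        ((S.filter fun s => ((({s} : Finset G) * X) ∩ (({s'} : Finset G) * X)).Nonempty ∧
          ((X * ({s} : Finset G)) ∩ (X * ({s'} : Finset G))).Nonempty).card : ℝ) ∧
      (X⁻¹ = X →
        ∀ s ∈ S, ((({s} : Finset G) * X) ∩ (({s'} : Finset G) * X)).Nonempty →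
          ((X * ({s} : Finset G)) ∩ (X * ({s'} : Finset G))).Nonempty →
          s ^ 2 ∈ ({s'} : Finset G) * X ^ 4 * ({s'} : Finset G)) := by
  -- The third clause, proven once and for all.
  have third : ∀ s' ∈ S, X⁻¹ = X →
      ∀ s ∈ S, ((({s} : Finset G) * X) ∩ (({s'} : Finset G) * X)).Nonempty →
        ((X * ({s} : Finset G)) ∩ (X * ({s'} : Finset G))).Nonempty →
        s ^ 2 ∈ ({s'} : Finset G) * X ^ 4 * ({s'} : Finset G) := by
    intro s' _ hsym s _ h1 h2
    obtain ⟨z, hz⟩ := h1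
    rw [Finset.mem_inter] at hz
    obtain ⟨hz1, hz2⟩ := hz
    rw [Finset.mem_mul] at hz1 hz2
    obtain ⟨a, ha, x₁, hx₁, hax₁⟩ := hz1
    obtain ⟨b, hb, x₂, hx₂, hbx₂⟩ := hz2
    rw [Finset.mem_singleton] at ha hb
    rw [ha] at hax₁
    rw [hb] at hbx₂
    obtain ⟨w, hw⟩ := h2
    rw [Finset.mem_inter] at hw
    obtain ⟨hw1, hw2⟩ := hw
    rw [Finset.mem_mul] at hw1 hw2
    obtain ⟨y₁, hy₁, c, hc, hy₁c⟩ := hw1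
    obtain ⟨y₂, hy₂, d, hd, hy₂d⟩ := hw2
    rw [Finset.mem_singleton] at hc hd
    rw [hc] at hy₁c
    rw [hd] at hy₂d
    have hx : s * x₁ = s' * x₂ := by rw [hax₁, hbx₂]
    have hy : y₁ * s = y₂ * s' := by rw [hy₁c, hy₂d]
    have hx₁' : x₁⁻¹ ∈ X := by rw [← hsym]; exact Finset.inv_mem_inv hx₁
    have hy₁' : y₁⁻¹ ∈ X := by rw [← hsym]; exact Finset.inv_mem_inv hy₁
    have hm : x₂ * x₁⁻¹ * y₁⁻¹ * y₂ ∈ X ^ 4 := by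
      have h4 : (X : Finset G) ^ 4 = X * X * X * X := by
        rw [pow_succ, pow_succ, pow_two]
      rw [h4]
      exact Finset.mul_mem_mul (Finset.mul_mem_mul (Finset.mul_mem_mul hx₂ hx₁') hy₁') hy₂
    have key : s ^ 2 = s' * (x₂ * x₁⁻¹ * y₁⁻¹ * y₂) * s' := by
      have e1 : s = s' * x₂ * x₁⁻¹ := by
        rw [eq_mul_inv_iff_mul_eq]; exact hx
      have e2 : s = y₁⁻¹ * (y₂ * s') := by
        rw [eq_inv_mul_iff_mul_eq]
        exact hy
      calc s ^ 2 = (s' * x₂ * x₁⁻¹) * (y₁⁻¹ * (y₂ * s')) := by rw [sq, ← e1, ← e2]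
        _ = s' * (x₂ * x₁⁻¹ * y₁⁻¹ * y₂) * s' := by group
    rw [key]
    exact Finset.mul_mem_mul (Finset.mul_mem_mul (Finset.mem_singleton_self s') hm)
      (Finset.mem_singleton_self s')
  by_cases hX : X = ∅
  · subst hX
    obtain ⟨s₀, hs₀⟩ := hS
    refine ⟨by simp, s₀, hs₀, ?_, third s₀ hs₀⟩
    simp
  have hXne : X.Nonempty := Finset.nonempty_iff_ne_empty.2 hX
  set A := S * X with hA
  set B := X * S with hB
  have hAne : A.Nonempty := hS.mul hXne
  have hBne : B.Nonempty := hXne.mul hS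
  have hApos : (0 : ℝ) < A.card := by exact_mod_cast Finset.card_pos.2 hAne
  have hBpos : (0 : ℝ) < B.card := by exact_mod_cast Finset.card_pos.2 hBne
  set f : G → G → ℝ := fun s z => if z ∈ ({s} : Finset G) * X then (1 : ℝ) else 0 with hf
  set g : G → G → ℝ := fun s z => if z ∈ X * ({s} : Finset G) then (1 : ℝ) else 0 with hg
  set RHS : ℝ := ∑ s ∈ S, ∑ s' ∈ S,
      (((({s} : Finset G) * X) ∩ (({s'} : Finset G) * X)).card : ℝ) *
        (((X * ({s} : Finset G)) ∩ (X * ({s'} : Finset G))).card : ℝ) with hRHS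
  -- linear sum
  have key1 : ∑ z ∈ A, ∑ z' ∈ B, ∑ s ∈ S, f s z * g s z'
      = (S.card : ℝ) * (X.card : ℝ) ^ 2 := by
    rw [sum_lin_expand]
    have : ∀ s ∈ S, (∑ z ∈ A, f s z) * (∑ z' ∈ B, g s z')
        = (X.card : ℝ) * (X.card : ℝ) := by
      intro s hs
      have h1 : ∑ z ∈ A, f s z = ((A ∩ (({s} : Finset G) * X)).card : ℝ) := sum_ind A _
      have h2 : ∑ z' ∈ B, g s z' = ((B ∩ (X * ({s} : Finset G))).card : ℝ) := sum_ind B _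
      have e1 : A ∩ (({s} : Finset G) * X) = ({s} : Finset G) * X :=
        Finset.inter_eq_right.2 (Finset.mul_subset_mul_right
          (Finset.singleton_subset_iff.2 hs))
      have e2 : B ∩ (X * ({s} : Finset G)) = X * ({s} : Finset G) :=
        Finset.inter_eq_right.2 (Finset.mul_subset_mul_left
          (Finset.singleton_subset_iff.2 hs))
      have c1 : (({s} : Finset G) * X).card = X.card := by
        rw [Finset.singleton_mul, Finset.card_smul_finset]
      have c2 : (X * ({s} : Finset G)).card = X.card := by
        rw [Finset.mul_singleton, Finset.card_smul_finset]
      rw [h1, h2, e1, e2, c1, c2]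
    rw [Finset.sum_congr rfl this, Finset.sum_const, nsmul_eq_mul]
    ring
  -- square sum
  have key2 : ∑ z : G, ∑ z' : G, (∑ s ∈ S, f s z * g s z') ^ 2 = RHS := by
    rw [sum_sq_expand]
    refine Finset.sum_congr rfl fun s _ => Finset.sum_congr rfl fun s' _ => ?_
    rw [sum_ind2, sum_ind2]
  -- Cauchy-Schwarz
  have hCS := Finset.sum_mul_sq_le_sq_mul_sq (A ×ˢ B)
    (fun p => ∑ s ∈ S, f s p.1 * g s p.2) (fun _ => (1 : ℝ))
  simp only [mul_one, one_pow] at hCS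
  rw [Finset.sum_const, Finset.card_product, Finset.sum_product] at hCS
  rw [key1] at hCS
  have hmono : ∑ p ∈ A ×ˢ B, (∑ s ∈ S, f s p.1 * g s p.2) ^ 2
      ≤ ∑ z : G, ∑ z' : G, (∑ s ∈ S, f s z * g s z') ^ 2 := by
    have e : ∑ z : G, ∑ z' : G, (∑ s ∈ S, f s z * g s z') ^ 2
        = ∑ p ∈ (Finset.univ ×ˢ Finset.univ : Finset (G × G)),
            (∑ s ∈ S, f s p.1 * g s p.2) ^ 2 := by
      rw [Finset.sum_product]
    rw [e]
    exact Finset.sum_le_sum_of_subset_of_nonneg (Finset.subset_univ _)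
      (fun _ _ _ => sq_nonneg _)
  rw [key2] at hmono
  have main : ((S.card : ℝ) * (X.card : ℝ) ^ 2) ^ 2 ≤ RHS * ((A.card : ℝ) * (B.card : ℝ)) := by
    calc ((S.card : ℝ) * (X.card : ℝ) ^ 2) ^ 2
        ≤ (∑ p ∈ A ×ˢ B, (∑ s ∈ S, f s p.1 * g s p.2) ^ 2) * ((A.card : ℝ) * (B.card : ℝ)) := by
          have hcast : ((A.card * B.card : ℕ) : ℝ) = (A.card : ℝ) * (B.card : ℝ) := by
            push_cast; ring
          calc ((S.card : ℝ) * (X.card : ℝ) ^ 2) ^ 2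
              ≤ (∑ p ∈ A ×ˢ B, (∑ s ∈ S, f s p.1 * g s p.2) ^ 2) * ((A.card * B.card : ℕ) : ℝ) := by
                rw [nsmul_eq_mul] at hCS
                calc ((S.card : ℝ) * (X.card : ℝ) ^ 2) ^ 2 ≤ _ := hCS
                  _ = _ := by ring
            _ = _ := by rw [hcast]
      _ ≤ RHS * ((A.card : ℝ) * (B.card : ℝ)) := by
          apply mul_le_mul_of_nonneg_right hmono (by positivity)
  have part1 : (X.card : ℝ) ^ 4 * (S.card : ℝ) ^ 2 / ((A.card : ℝ) * (B.card : ℝ)) ≤ RHS := by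
    rw [div_le_iff₀ (by positivity)]
    nlinarith [main]
  refine ⟨part1, ?_⟩
  -- Part 2: averaging
  set D : ℝ := (A.card : ℝ) * (B.card : ℝ) with hD
  have hDpos : (0 : ℝ) < D := by positivity
  have hScard : (0 : ℝ) < S.card := by exact_mod_cast Finset.card_pos.2 hS
  have hswap : RHS = ∑ s' ∈ S, ∑ s ∈ S,
      (((({s} : Finset G) * X) ∩ (({s'} : Finset G) * X)).card : ℝ) *
        (((X * ({s} : Finset G)) ∩ (X * ({s'} : Finset G))).card : ℝ) := by
    rw [hRHS, Finset.sum_comm]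
  have havg : ∃ s' ∈ S, (X.card : ℝ) ^ 4 * (S.card : ℝ) / D
      ≤ ∑ s ∈ S,
        (((({s} : Finset G) * X) ∩ (({s'} : Finset G) * X)).card : ℝ) *
          (((X * ({s} : Finset G)) ∩ (X * ({s'} : Finset G))).card : ℝ) := by
    apply Finset.exists_le_of_sum_le hS
    rw [Finset.sum_const, nsmul_eq_mul, ← hswap]
    calc (S.card : ℝ) * ((X.card : ℝ) ^ 4 * (S.card : ℝ) / D)
        = (X.card : ℝ) ^ 4 * (S.card : ℝ) ^ 2 / D := by ring
      _ ≤ RHS := part1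
  obtain ⟨s', hs'S, hs'⟩ := havg
  refine ⟨s', hs'S, ?_, third s' hs'S⟩
  set P : G → Prop := fun s => ((({s} : Finset G) * X) ∩ (({s'} : Finset G) * X)).Nonempty ∧
      ((X * ({s} : Finset G)) ∩ (X * ({s'} : Finset G))).Nonempty with hP
  have hfilter : ∑ s ∈ S,
      (((({s} : Finset G) * X) ∩ (({s'} : Finset G) * X)).card : ℝ) *
        (((X * ({s} : Finset G)) ∩ (X * ({s'} : Finset G))).card : ℝ)
      ≤ ((S.filter P).card : ℝ) * (X.card : ℝ) ^ 2 := by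
    rw [← Finset.sum_filter_of_ne (p := P) (fun s _ hne => ?_)]
    · calc ∑ s ∈ S.filter P,
          (((({s} : Finset G) * X) ∩ (({s'} : Finset G) * X)).card : ℝ) *
            (((X * ({s} : Finset G)) ∩ (X * ({s'} : Finset G))).card : ℝ)
          ≤ ∑ _s ∈ S.filter P, (X.card : ℝ) * (X.card : ℝ) := by
            apply Finset.sum_le_sum
            intro s _
            have b1 : ((({s} : Finset G) * X) ∩ (({s'} : Finset G) * X)).card ≤ X.card := by
              calc ((({s} : Finset G) * X) ∩ (({s'} : Finset G) * X)).card
                  ≤ (({s} : Finset G) * X).card := Finset.card_le_card (Finset.inter_subset_left)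
                _ = X.card := by rw [Finset.singleton_mul, Finset.card_smul_finset]
            have b2 : ((X * ({s} : Finset G)) ∩ (X * ({s'} : Finset G))).card ≤ X.card := by
              calc ((X * ({s} : Finset G)) ∩ (X * ({s'} : Finset G))).card
                  ≤ (X * ({s} : Finset G)).card := Finset.card_le_card (Finset.inter_subset_left)
                _ = X.card := by rw [Finset.mul_singleton, Finset.card_smul_finset]
            have b1' : (((({s} : Finset G) * X) ∩ (({s'} : Finset G) * X)).card : ℝ) ≤ X.card := by
              exact_mod_cast b1
            have b2' : (((X * ({s} : Finset G)) ∩ (X * ({s'} : Finset G))).card : ℝ) ≤ X.card := by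
              exact_mod_cast b2
            exact mul_le_mul b1' b2' (by positivity) (by positivity)
        _ = ((S.filter P).card : ℝ) * (X.card : ℝ) ^ 2 := by
            rw [Finset.sum_const, nsmul_eq_mul]; ring
    · -- nonzero term implies both intersections nonempty
      constructor
      · rw [Finset.nonempty_iff_ne_empty]
        intro he
        apply hne
        rw [he]; simp
      · rw [Finset.nonempty_iff_ne_empty]
        intro he
        apply hne
        rw [he]; simp
  have hXpos : (0 : ℝ) < (X.card : ℝ) := by exact_mod_cast Finset.card_pos.2 hXne
  have hchain : (X.card : ℝ) ^ 4 * (S.card : ℝ) / D ≤ ((S.filter P).card : ℝ) * (X.card : ℝ) ^ 2 :=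
    le_trans hs' hfilter
  rw [div_le_iff₀ hDpos] at hchain
  rw [div_mul_eq_mul_div, div_le_iff₀ hDpos]
  have hEq : (S.filter fun s => ((({s} : Finset G) * X) ∩ (({s'} : Finset G) * X)).Nonempty ∧
      ((X * ({s} : Finset G)) ∩ (X * ({s'} : Finset G))).Nonempty) = S.filter P :=
    Finset.filter_congr_decidable S P _
  rw [hEq]
  nlinarith [hchain, mul_pos hXpos hXpos, hXpos]
end

section
/- Let G be a finite group and S, X ⊆ G finite nonempty sets. Then Σ_{s,s'∈S} |sX ∩ s'X|·|Xs ∩ Xs'| ≥ |X|⁴·|S|²/(|SX|·|XS|). -/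
open Finset
open scoped Pointwise

/-- `Σ_{s,s'∈S} |sX ∩ s'X|·|Xs ∩ Xs'| ≥ |X|⁴|S|²/(|SX||XS|)`. -/
theorem stmt16 {G : Type*} [Group G] [Fintype G] [DecidableEq G] (S X : Finset G)
    (hS : S.Nonempty) (hX : X.Nonempty) :
    ((X.card : ℝ)) ^ 4 * (S.card : ℝ) ^ 2 / (((S * X).card : ℝ) * ((X * S).card : ℝ)) ≤
      ∑ s ∈ S, ∑ s' ∈ S,
        (((({s} : Finset G) * X) ∩ (({s'} : Finset G) * X)).card : ℝ) *
          (((X * ({s} : Finset G)) ∩ (X * ({s'} : Finset G))).card : ℝ) := by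
  classical
  set f : G × G → ℝ := fun p =>
    ∑ s ∈ S, (if p.1 ∈ ({s} : Finset G) * X ∧ p.2 ∈ X * ({s} : Finset G) then (1:ℝ) else 0)
    with hf
  have key : ∀ A B : Finset G,
      (∑ p : G × G, if p.1 ∈ A ∧ p.2 ∈ B then (1:ℝ) else 0) = A.card * B.card := by
    intro A B
    rw [Fintype.sum_prod_type]
    have h : ∀ a b : G, (if a ∈ A ∧ b ∈ B then (1:ℝ) else 0) =
        (if a ∈ A then (1:ℝ) else 0) * (if b ∈ B then (1:ℝ) else 0) := by
      intro a b; by_cases ha : a ∈ A <;> by_cases hb : b ∈ B <;> simp [ha, hb]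
    simp_rw [h, ← Finset.mul_sum, ← Finset.sum_mul]
    have hA : (∑ a : G, if a ∈ A then (1:ℝ) else 0) = A.card := by
      rw [Finset.sum_boole]; rw [Finset.filter_univ_mem]
    have hB : (∑ b : G, if b ∈ B then (1:ℝ) else 0) = B.card := by
      rw [Finset.sum_boole]; rw [Finset.filter_univ_mem]
    rw [hA, hB]
  -- total sum of f
  have E1 : ∑ p : G × G, f p = (X.card : ℝ)^2 * S.card := by
    rw [Finset.sum_comm]
    have : ∀ s ∈ S, (∑ p : G × G,
        if p.1 ∈ ({s} : Finset G) * X ∧ p.2 ∈ X * ({s} : Finset G) then (1:ℝ) else 0)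
        = (X.card : ℝ)^2 := by
      intro s _
      rw [key]
      simp [sq]
    rw [Finset.sum_congr rfl this]
    simp [mul_comm]
  -- sum of squares of f
  have E2 : ∑ p : G × G, f p ^ 2 =
      ∑ s ∈ S, ∑ s' ∈ S,
        (((({s} : Finset G) * X) ∩ (({s'} : Finset G) * X)).card : ℝ) *
          (((X * ({s} : Finset G)) ∩ (X * ({s'} : Finset G))).card : ℝ) := by
    have expand : ∀ p : G × G, f p ^ 2 = ∑ s ∈ S, ∑ s' ∈ S,
        (if p.1 ∈ (({s} : Finset G) * X) ∩ (({s'} : Finset G) * X) ∧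
            p.2 ∈ (X * ({s} : Finset G)) ∩ (X * ({s'} : Finset G)) then (1:ℝ) else 0) := by
      intro p
      rw [hf, sq, Finset.sum_mul_sum]
      refine Finset.sum_congr rfl fun s _ => Finset.sum_congr rfl fun s' _ => ?_
      by_cases h1 : p.1 ∈ ({s} : Finset G) * X <;>
        by_cases h2 : p.2 ∈ X * ({s} : Finset G) <;>
        by_cases h3 : p.1 ∈ ({s'} : Finset G) * X <;>
        by_cases h4 : p.2 ∈ X * ({s'} : Finset G) <;>
        simp [h1, h2, h3, h4, Finset.mem_inter]
    simp_rw [expand]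
    rw [Finset.sum_comm]
    refine Finset.sum_congr rfl fun s _ => ?_
    rw [Finset.sum_comm]
    refine Finset.sum_congr rfl fun s' _ => key _ _
  -- f vanishes outside (S*X) ×ˢ (X*S)
  set P : Finset (G × G) := (S * X) ×ˢ (X * S) with hP
  have vanish : ∀ p ∈ (Finset.univ : Finset (G × G)), p ∉ P → f p = 0 := by
    intro p _ hp
    rw [hf]
    refine Finset.sum_eq_zero fun s hs => ?_
    rw [if_neg]
    rintro ⟨h1, h2⟩
    exact hp (Finset.mem_product.2
      ⟨Finset.mul_subset_mul (Finset.singleton_subset_iff.2 hs) Finset.Subset.rfl h1,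
       Finset.mul_subset_mul Finset.Subset.rfl (Finset.singleton_subset_iff.2 hs) h2⟩)
  have EP : ∑ p ∈ P, f p = (X.card : ℝ)^2 * S.card := by
    rw [← E1]
    exact Finset.sum_subset (Finset.subset_univ P) vanish
  -- Cauchy–Schwarz
  have CS : (∑ p ∈ P, f p) ^ 2 ≤ (P.card : ℝ) * ∑ p ∈ P, f p ^ 2 :=
    sq_sum_le_card_mul_sum_sq
  have hle : ∑ p ∈ P, f p ^ 2 ≤ ∑ p : G × G, f p ^ 2 :=
    Finset.sum_le_sum_of_subset_of_nonneg (Finset.subset_univ P)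
      (fun i _ _ => sq_nonneg _)
  have hPcard : (P.card : ℝ) = ((S * X).card : ℝ) * ((X * S).card : ℝ) := by
    rw [hP, Finset.card_product]; push_cast; ring
  have hpos1 : (0:ℝ) < ((S * X).card : ℝ) := by
    exact_mod_cast Finset.card_pos.2 (hS.mul hX)
  have hpos2 : (0:ℝ) < ((X * S).card : ℝ) := by
    exact_mod_cast Finset.card_pos.2 (hX.mul hS)
  rw [div_le_iff₀ (by positivity)]
  rw [← E2]
  calc (X.card : ℝ) ^ 4 * (S.card : ℝ) ^ 2
      = ((X.card : ℝ)^2 * S.card) ^ 2 := by ring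
    _ = (∑ p ∈ P, f p) ^ 2 := by rw [EP]
    _ ≤ (P.card : ℝ) * ∑ p ∈ P, f p ^ 2 := CS
    _ ≤ (P.card : ℝ) * ∑ p : G × G, f p ^ 2 := by
        apply mul_le_mul_of_nonneg_left hle (by positivity)
    _ = (∑ p : G × G, f p ^ 2) * (((S * X).card : ℝ) * ((X * S).card : ℝ)) := by
        rw [hPcard]; ring
end
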